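/- arXiv:2005.01496 — 3 statements merged into one kernel-verified Lean document; each statement's English description precedes it below -/
import Mathlib

section
/- Fix n ≥ 1 and integral q ∈ ℤ^n. Define q' = q + ∑_{i=2}^n (1/(2(n-i+1))) e^i, q^+ = q' + (1/(2n)) e^1 and q^- = q' - (1/(2n)) e^1. Then an integral bid b ∈ ℤ^n demands different goods at q^- and q^+ if and only if b_1 = q_1 and b ≤ q' componentwise; moreover any such bid uniquely demands good 1 at q^- and the reject good 0 at q^+. -/
/-- Utility of a bid `b` at price `p` for good `i`, where `none` is the reject good 0. -/
def util {n : ℕ} (b : Fin n → ℤ) (p : Fin n → ℝ) : Option (Fin n) → ℝ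
  | Option.none => 0
  | Option.some k => (b k : ℝ) - p k

/-- Bid `b` uniquely demands good `i` at price `p`. -/
def UDem {n : ℕ} (b : Fin n → ℤ) (p : Fin n → ℝ) (i : Option (Fin n)) : Prop :=
  ∀ j, j ≠ i → util b p j < util b p i

/-- The perturbed price `q'`. -/
noncomputable def qpert (n : ℕ) (q : Fin n → ℤ) : Fin n → ℝ := fun k =>
  (q k : ℝ) + (if k.val = 0 then 0 else 1 / (2 * ((n - k.val : ℕ) : ℝ)))

noncomputable def qplus (n : ℕ) (q : Fin n → ℤ) : Fin n → ℝ := fun k =>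
  qpert n q k + (if k.val = 0 then 1 / (2 * (n : ℝ)) else 0)

noncomputable def qminus (n : ℕ) (q : Fin n → ℤ) : Fin n → ℝ := fun k =>
  qpert n q k - (if k.val = 0 then 1 / (2 * (n : ℝ)) else 0)

lemma eps_facts (n : ℕ) (k : Fin n) (hk : k.val ≠ 0) :
    1/(2*(n:ℝ)) < 1/(2*((n - k.val : ℕ) : ℝ)) ∧ 1/(2*((n - k.val : ℕ) : ℝ)) ≤ 1/2 ∧
    0 < 1/(2*((n - k.val : ℕ) : ℝ)) := by
  have hkn := k.isLt
  have h1 : 1 ≤ n - k.val := by omega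
  have h2 : n - k.val < n := by omega
  have c1 : (1:ℝ) ≤ ((n - k.val : ℕ) : ℝ) := by exact_mod_cast h1
  have c2 : ((n - k.val : ℕ) : ℝ) < (n:ℝ) := by exact_mod_cast h2
  refine ⟨?_, ?_, ?_⟩
  · exact one_div_lt_one_div_of_lt (by linarith) (by linarith)
  · exact one_div_le_one_div_of_le (by norm_num) (by linarith)
  · exact one_div_pos.mpr (by linarith)

lemma key (n : ℕ) (hn : 0 < n) (q b : Fin n → ℤ)
    (h0 : b ⟨0, hn⟩ = q ⟨0, hn⟩) (hle : ∀ k, (b k : ℝ) ≤ qpert n q k) :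
    UDem b (qminus n q) (some ⟨0, hn⟩) ∧ UDem b (qplus n q) none := by
  have hn' : (0:ℝ) < (n:ℝ) := by exact_mod_cast hn
  have hn1 : (1:ℝ) ≤ (n:ℝ) := by exact_mod_cast hn
  have h2n : 0 < 1/(2*(n:ℝ)) := by positivity
  have hbk : ∀ k : Fin n, k.val ≠ 0 → (b k : ℤ) ≤ q k := by
    intro k hk
    obtain ⟨_, he2, he3⟩ := eps_facts n k hk
    have h := hle k
    simp only [qpert, if_neg hk] at h
    have : (b k : ℝ) - (q k : ℝ) < 1 := by linarith
    have : (b k : ℤ) - q k < 1 := by exact_mod_cast this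
    omega
  have uzm : util b (qminus n q) (some ⟨0, hn⟩)
      = (b ⟨0, hn⟩ : ℝ) - (q ⟨0, hn⟩ : ℝ) + 1/(2*(n:ℝ)) := by
    simp [util, qminus, qpert]; ring
  have uzp : util b (qplus n q) (some ⟨0, hn⟩)
      = (b ⟨0, hn⟩ : ℝ) - (q ⟨0, hn⟩ : ℝ) - 1/(2*(n:ℝ)) := by
    simp [util, qplus, qpert]; ring
  have ukm : ∀ k : Fin n, k.val ≠ 0 →
      util b (qminus n q) (some k) = (b k : ℝ) - (q k : ℝ) - 1/(2*((n - k.val : ℕ) : ℝ)) := by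
    intro k hk; simp [util, qminus, qpert, hk]; ring
  have ukp : ∀ k : Fin n, k.val ≠ 0 →
      util b (qplus n q) (some k) = (b k : ℝ) - (q k : ℝ) - 1/(2*((n - k.val : ℕ) : ℝ)) := by
    intro k hk; simp [util, qplus, qpert, hk]; ring
  have hz0 : (b ⟨0, hn⟩ : ℝ) = (q ⟨0, hn⟩ : ℝ) := by exact_mod_cast h0
  constructor
  · rintro (_ | k) hj
    · rw [uzm]; show (0:ℝ) < _; linarith
    · have hk : k.val ≠ 0 := by
        intro h; exact hj (by simp [Option.some_inj, Fin.ext_iff, h])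
      obtain ⟨_, _, he3⟩ := eps_facts n k hk
      have hb := hbk k hk
      have hb' : (b k : ℝ) ≤ (q k : ℝ) := by exact_mod_cast hb
      rw [uzm, ukm k hk]
      linarith
  · rintro (_ | k) hj
    · exact absurd rfl hj
    · by_cases hk : k.val = 0
      · have : k = ⟨0, hn⟩ := Fin.ext hk
        subst this
        rw [uzp]; show _ < (0:ℝ); linarith
      · obtain ⟨_, _, he3⟩ := eps_facts n k hk
        have hb' : (b k : ℝ) ≤ (q k : ℝ) := by exact_mod_cast hbk k hk
        rw [ukp k hk]; show _ < (0:ℝ); linarith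

theorem stmt_4 (n : ℕ) (hn : 0 < n) (q b : Fin n → ℤ) :
    ((∃ i j : Option (Fin n), i ≠ j ∧ UDem b (qminus n q) i ∧ UDem b (qplus n q) j) ↔
      (b ⟨0, hn⟩ = q ⟨0, hn⟩ ∧ ∀ k, (b k : ℝ) ≤ qpert n q k)) ∧
    ((b ⟨0, hn⟩ = q ⟨0, hn⟩ ∧ ∀ k, (b k : ℝ) ≤ qpert n q k) →
      UDem b (qminus n q) (some ⟨0, hn⟩) ∧ UDem b (qplus n q) none) := by
  have hn' : (0:ℝ) < (n:ℝ) := by exact_mod_cast hn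
  have hn1 : (1:ℝ) ≤ (n:ℝ) := by exact_mod_cast hn
  have h2n : 0 < 1/(2*(n:ℝ)) := by positivity
  have uzm : util b (qminus n q) (some ⟨0, hn⟩)
      = (b ⟨0, hn⟩ : ℝ) - (q ⟨0, hn⟩ : ℝ) + 1/(2*(n:ℝ)) := by
    simp [util, qminus, qpert]; ring
  have uzp : util b (qplus n q) (some ⟨0, hn⟩)
      = (b ⟨0, hn⟩ : ℝ) - (q ⟨0, hn⟩ : ℝ) - 1/(2*(n:ℝ)) := by
    simp [util, qplus, qpert]; ring
  have ukm : ∀ k : Fin n, k.val ≠ 0 →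
      util b (qminus n q) (some k) = (b k : ℝ) - (q k : ℝ) - 1/(2*((n - k.val : ℕ) : ℝ)) := by
    intro k hk; simp [util, qminus, qpert, hk]; ring
  have ukp : ∀ k : Fin n, k.val ≠ 0 →
      util b (qplus n q) (some k) = (b k : ℝ) - (q k : ℝ) - 1/(2*((n - k.val : ℕ) : ℝ)) := by
    intro k hk; simp [util, qplus, qpert, hk]; ring
  constructor
  · constructor
    · rintro ⟨i, j, hij, hi, hj⟩
      -- Step 1 : i = some ⟨0, hn⟩
      have hiz : i = some ⟨0, hn⟩ := by
        by_contra hne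
        have hpm : ∀ x : Option (Fin n), x ≠ some ⟨0, hn⟩ →
            util b (qplus n q) x = util b (qminus n q) x := by
          rintro (_ | k) hx
          · rfl
          · have hk : k.val ≠ 0 := by
              intro h; exact hx (by simp [Option.some_inj, Fin.ext_iff, h])
            rw [ukm k hk, ukp k hk]
        have h1 := hi j (Ne.symm hij)
        have h2 := hj i hij
        have h3 := hpm i hne
        have h4 : util b (qplus n q) j ≤ util b (qminus n q) j := by
          by_cases hjz : j = some ⟨0, hn⟩
          · subst hjz; rw [uzm, uzp]; linarith
          · exact le_of_eq (hpm j hjz)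
        linarith
      subst hiz
      have hA := hi none (by simp)
      have hB := hj _ hij
      -- b z ≥ q z
      have hbz_ge : q ⟨0, hn⟩ ≤ b ⟨0, hn⟩ := by
        rw [uzm] at hA
        have h12 : 1/(2*(n:ℝ)) ≤ 1/2 :=
          one_div_le_one_div_of_le (by norm_num) (by linarith)
        have : (-1 : ℝ) < (b ⟨0, hn⟩ : ℝ) - (q ⟨0, hn⟩ : ℝ) := by
          simp only [util] at hA; linarith
        have : (-1 : ℤ) < b ⟨0, hn⟩ - q ⟨0, hn⟩ := by exact_mod_cast this
        omega
      -- Step 2 : j = none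
      have hjn : j = none := by
        rcases j with _ | k
        · rfl
        · exfalso
          have hk : k.val ≠ 0 := by
            intro h
            exact hij (by simp [Option.some_inj, Fin.ext_iff, h])
          obtain ⟨he1, he2, he3⟩ := eps_facts n k hk
          have hn2 : 2 ≤ n := by have := k.isLt; omega
          have hn2' : (2:ℝ) ≤ (n:ℝ) := by exact_mod_cast hn2
          have h14 : 1/(2*(n:ℝ)) ≤ 1/4 :=
            one_div_le_one_div_of_le (by norm_num) (by linarith)
          have hC := hi (some k) hij.symm
          rw [uzm, ukm k hk] at hC
          rw [uzp, ukp k hk] at hB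
          have hlow : (b ⟨0, hn⟩ : ℝ) - (q ⟨0, hn⟩ : ℝ) < (b k : ℝ) - (q k : ℝ) := by
            linarith
          have hhigh : (b k : ℝ) - (q k : ℝ) < (b ⟨0, hn⟩ : ℝ) - (q ⟨0, hn⟩ : ℝ) + 1 := by
            linarith
          have hlow' : b ⟨0, hn⟩ - q ⟨0, hn⟩ < b k - q k := by exact_mod_cast hlow
          have hhigh' : b k - q k < b ⟨0, hn⟩ - q ⟨0, hn⟩ + 1 := by exact_mod_cast hhigh
          omega
      subst hjn
      rw [uzp] at hB
      simp only [util] at hB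
      have h12 : 1/(2*(n:ℝ)) ≤ 1/2 :=
        one_div_le_one_div_of_le (by norm_num) (by linarith)
      have hbz_le : b ⟨0, hn⟩ ≤ q ⟨0, hn⟩ := by
        have : (b ⟨0, hn⟩ : ℝ) - (q ⟨0, hn⟩ : ℝ) < 1 := by linarith
        have : b ⟨0, hn⟩ - q ⟨0, hn⟩ < 1 := by exact_mod_cast this
        omega
      have hbz : b ⟨0, hn⟩ = q ⟨0, hn⟩ := le_antisymm hbz_le hbz_ge
      refine ⟨hbz, fun k => ?_⟩
      by_cases hk : k.val = 0
      · have hkz : k = ⟨0, hn⟩ := Fin.ext hk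
        subst hkz
        simp [qpert, hbz]
      · have := hj (some k) (by simp)
        rw [ukp k hk] at this
        simp only [util, qpert, if_neg hk] at this ⊢
        linarith
    · rintro ⟨h0, hle⟩
      exact ⟨some ⟨0, hn⟩, none, by simp, (key n hn q b h0 hle).1, (key n hn q b h0 hle).2⟩
  · rintro ⟨h0, hle⟩
    exact key n hn q b h0 hle
end

section
/- Define the island gadget at position x ∈ ℤ^n as the multiset of 2^{n+1} weighted bids: for each b ∈ x + {0,1}^n a bid of weight ρ(b - x), and for each b ∈ x + {2,3}^n a bid of weight -ρ(b - x), where ρ(v) = +1 if v has an even number of odd entries and -1 otherwise. Then for every price p ∉ x + [0,3]^n and every good i ∈ [n], the signed number of gadget bids uniquely demanding good i at p is zero. -/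
open Finset

def rho {n : ℕ} (ε : Fin n → Bool) : ℤ :=
  (-1) ^ (Finset.univ.filter (fun k => ε k = true)).card

def bidL {n : ℕ} (x : Fin n → ℤ) (ε : Fin n → Bool) : Fin n → ℤ :=
  fun k => x k + (if ε k then 1 else 0)

def bidU {n : ℕ} (x : Fin n → ℤ) (ε : Fin n → Bool) : Fin n → ℤ :=
  fun k => x k + 2 + (if ε k then 1 else 0)

lemma rho_prod {n : ℕ} (ε : Fin n → Bool) :
    rho ε = ∏ j, (if ε j then (-1:ℤ) else 1) := by
  rw [rho, ← Finset.prod_const, Finset.prod_filter]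

lemma rho_flip {n : ℕ} (ε : Fin n → Bool) (k : Fin n) :
    rho (Function.update ε k (!ε k)) = - rho ε := by
  rw [rho_prod, rho_prod]
  have h : (fun j => if Function.update ε k (!ε k) j then (-1:ℤ) else 1)
      = Function.update (fun j => if ε j then (-1:ℤ) else 1) k
        (if !ε k then (-1:ℤ) else 1) := by
    funext j
    by_cases hj : j = k
    · subst hj; simp
    · simp [Function.update_of_ne hj]
  rw [h, Finset.prod_update_of_mem (Finset.mem_univ k),
    Finset.prod_eq_mul_prod_sdiff_singleton_of_mem (Finset.mem_univ k)
      (fun j => if ε j then (-1:ℤ) else 1)]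
  cases hek : ε k <;> simp


/-- If the two bids agree away from `k` and both lose money on good `k`,
unique demand for good `i ≠ k` transfers. -/
lemma udem_congr {n : ℕ} {b b' : Fin n → ℤ} {p : Fin n → ℝ} {i k : Fin n}
    (hik : k ≠ i) (hb : ∀ j, j ≠ k → b j = b' j)
    (h2 : (b' k : ℝ) < p k) (h : UDem b p (some i)) : UDem b' p (some i) := by
  have hbi : b i = b' i := hb i (fun h' => hik h'.symm)
  have hpos : (0:ℝ) < (b' i : ℝ) - p i := by
    have := h none (by simp)
    simpa [util, hbi] using this
  intro j hj
  match j with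
  | none => simpa [util] using hpos
  | some j =>
    by_cases hjk : j = k
    · subst hjk
      simp only [util]
      have : (b' j : ℝ) - p j < 0 := by linarith
      linarith
    · have := h (some j) hj
      simp only [util] at this ⊢
      rw [hb j hjk, hbi] at this
      exact this

/-- Case A: some `p k < x k` makes lower and upper demands agree. -/
lemma udem_LU {n : ℕ} {x : Fin n → ℤ} {p : Fin n → ℝ} {k : Fin n}
    (hk : p k < (x k : ℝ)) (i : Fin n) (ε : Fin n → Bool) :
    UDem (bidL x ε) p (some i) ↔ UDem (bidU x ε) p (some i) := by
  have hbU : ∀ j, ((bidU x ε j : ℝ)) = (bidL x ε j : ℝ) + 2 := by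
    intro j; simp [bidL, bidU]; ring
  constructor
  · intro h j hj
    have hpos : (0:ℝ) < (bidL x ε i : ℝ) - p i := by
      simpa [util] using h none (by simp)
    match j with
    | none =>
      simp only [util, hbU]; linarith
    | some j =>
      have := h (some j) hj
      simp only [util, hbU] at this ⊢
      linarith
  · intro h j hj
    have hkL : (0:ℝ) < (bidL x ε k : ℝ) - p k := by
      have : (x k : ℝ) ≤ (bidL x ε k : ℝ) := by
        simp only [bidL]; push_cast; split <;> norm_num
      linarith
    have hpos : (0:ℝ) < (bidL x ε i : ℝ) - p i := by
      by_cases hki : k = i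
      · subst hki; exact hkL
      · have := h (some k) (by simp [hki])
        simp only [util, hbU] at this
        linarith
    match j with
    | none => simpa [util] using hpos
    | some j =>
      have := h (some j) hj
      simp only [util, hbU] at this ⊢
      linarith


lemma flip_invol {n : ℕ} (k : Fin n) :
    Function.Involutive (fun ε : Fin n → Bool => Function.update ε k (!ε k)) := by
  intro ε
  simp only [Function.update_self, Function.update_idem, Bool.not_not,
    Function.update_eq_self]

lemma sum_flip_zero {n : ℕ} (k : Fin n) (f : (Fin n → Bool) → ℤ)
    (hf : ∀ ε, f (Function.update ε k (!ε k)) = - f ε) : ∑ ε, f ε = 0 := by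
  have hinv := flip_invol k
  set e := Function.Involutive.toPerm _ hinv with he
  have h1 : ∑ ε, f (e ε) = ∑ ε, f ε := Equiv.sum_comp e f
  have h2 : ∀ ε : Fin n → Bool, f (e ε) = - f ε := fun ε => hf ε
  rw [Finset.sum_congr rfl (fun ε _ => h2 ε)] at h1
  rw [Finset.sum_neg_distrib] at h1
  omega

open Classical in
theorem stmt_8 (n : ℕ) (x : Fin n → ℤ) (p : Fin n → ℝ)
    (hp : ∃ k, p k < (x k : ℝ) ∨ (x k : ℝ) + 3 < p k) (i : Fin n) :
    (∑ ε : Fin n → Bool, rho ε * (if UDem (bidL x ε) p (some i) then 1 else 0)) +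
      (∑ ε : Fin n → Bool, (-rho ε) * (if UDem (bidU x ε) p (some i) then 1 else 0)) =
      0 := by
  obtain ⟨k, hk | hk⟩ := hp
  · -- p k < x k : termwise cancellation
    rw [← Finset.sum_add_distrib]
    apply Finset.sum_eq_zero
    intro ε _
    rw [if_congr (udem_LU hk i ε) rfl rfl]
    ring
  · -- x k + 3 < p k
    have hLle : ∀ ε : Fin n → Bool, ((bidL x ε k : ℤ) : ℝ) < p k := by
      intro ε; cases h : ε k <;> simp [bidL, h] <;> linarith
    have hUle : ∀ ε : Fin n → Bool, ((bidU x ε k : ℤ) : ℝ) < p k := by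
      intro ε; cases h : ε k <;> simp [bidU, h] <;> linarith
    by_cases hki : k = i
    · subst hki
      have h1 : ∀ b : Fin n → ℤ, ((b k : ℤ) : ℝ) < p k → ¬ UDem b p (some k) := by
        intro b hb h
        have := h none (by simp)
        simp only [util] at this
        linarith
      have e1 : (∑ ε : Fin n → Bool, rho ε * (if UDem (bidL x ε) p (some k) then 1 else 0)) = 0 :=
        Finset.sum_eq_zero (fun ε _ => by simp [h1 _ (hLle ε)])
      have e2 : (∑ ε : Fin n → Bool, (-rho ε) * (if UDem (bidU x ε) p (some k) then 1 else 0)) = 0 :=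
        Finset.sum_eq_zero (fun ε _ => by simp [h1 _ (hUle ε)])
      rw [e1, e2]; norm_num
    · -- k ≠ i : flip ε k in each sum
      have hik : k ≠ i := hki
      have hiffL : ∀ ε : Fin n → Bool,
          UDem (bidL x (Function.update ε k (!ε k))) p (some i) ↔
            UDem (bidL x ε) p (some i) := by
        intro ε
        constructor
        · exact udem_congr hik
            (fun j hj => by simp [bidL, Function.update_of_ne hj]) (hLle ε)
        · exact udem_congr hik
            (fun j hj => by simp [bidL, Function.update_of_ne hj])
            (hLle (Function.update ε k (!ε k)))
      have hiffU : ∀ ε : Fin n → Bool,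
          UDem (bidU x (Function.update ε k (!ε k))) p (some i) ↔
            UDem (bidU x ε) p (some i) := by
        intro ε
        constructor
        · exact udem_congr hik
            (fun j hj => by simp [bidU, Function.update_of_ne hj]) (hUle ε)
        · exact udem_congr hik
            (fun j hj => by simp [bidU, Function.update_of_ne hj])
            (hUle (Function.update ε k (!ε k)))
      have e1 : (∑ ε : Fin n → Bool, rho ε * (if UDem (bidL x ε) p (some i) then 1 else 0)) = 0 := by
        apply sum_flip_zero k
        intro ε
        rw [rho_flip, if_congr (hiffL ε) rfl rfl]
        ring
      have e2 : (∑ ε : Fin n → Bool, (-rho ε) * (if UDem (bidU x ε) p (some i) then 1 else 0)) = 0 := by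
        apply sum_flip_zero k
        intro ε
        rw [rho_flip, if_congr (hiffU ε) rfl rfl]
        ring
      rw [e1, e2]; norm_num
end

section
/- Let n ≥ 3, p ∈ {0,1}^n, and i ≠ j in [n]. Let B^L_{ij} = {b ∈ {0,1}^n : b_i ≥ p_i, b_j = b_i - p_i + p_j, and b_k ≤ b_i - p_i + p_k for all k ∉ {i,j}}, with each b weighted by ρ(b) = (-1)^{#odd entries of b}. If |B^L_{ij}| > 1, then ∑_{b ∈ B^L_{ij}} ρ(b) ∈ {0, 1}. -/
/-!
Flipping one coordinate negates `ρ`, so the `ρ`-sum over a set of bids closed under flipping a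
fixed coordinate vanishes; a coordinate `k ∉ {i, j}` can be flipped freely inside `B^L_{ij}` as
soon as its slack `b_i - p_i + p_k` is at least `1`. If `p_k = 1` for some `k ∉ {i, j}`, the
whole sum is therefore `0`. Otherwise every bid with `b_i = p_i` equals `p`, so `|B^L_{ij}| > 1`
forces a bid with `b_i > p_i`, whence `p_i = p_j = 0` and `p = 0`. Then `B^L_{ij}` is the zero
bid together with the face `b_i = b_j = 1`, on which any coordinate outside `{i, j}` is free,
and the sum is `ρ(0) = 1`.
-/

open Finset

/-- The value in `{0,1} ⊆ ℤ` of a Boolean vector coordinate. -/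
def val {n : ℕ} (ε : Fin n → Bool) : Fin n → ℤ := fun k => if ε k then 1 else 0

/-- `B^L_{ij}`: the lower-cube gadget bids indifferent between goods `i` and `j` at `p`. -/
def BL {n : ℕ} (p : Fin n → ℤ) (i j : Fin n) : Finset (Fin n → Bool) :=
  Finset.univ.filter (fun ε =>
    p i ≤ val ε i ∧ val ε j = val ε i - p i + p j ∧
      ∀ k, k ≠ i → k ≠ j → val ε k ≤ val ε i - p i + p k)

section

variable {n : ℕ}

lemma rho_eq_prod (ε : Fin n → Bool) : rho ε = ∏ k, if ε k then -1 else 1 := by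
  simp [rho, Finset.prod_ite]

lemma rho_update_not (ε : Fin n → Bool) (k : Fin n) :
    rho (Function.update ε k (!ε k)) = -rho ε := by
  rw [rho_eq_prod, rho_eq_prod, Fintype.prod_eq_mul_prod_compl k,
    Fintype.prod_eq_mul_prod_compl k,
    Finset.prod_congr rfl fun l hl => by rw [Function.update_of_ne (by simpa using hl)]]
  cases ε k <;> simp

lemma sum_rho_eq_zero_of_update_not_mem {s : Finset (Fin n → Bool)} (k : Fin n)
    (h : ∀ ε ∈ s, Function.update ε k (!ε k) ∈ s) : ∑ ε ∈ s, rho ε = 0 :=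
  Finset.sum_involution (fun ε _ => Function.update ε k (!ε k))
    (fun ε _ => by rw [rho_update_not, add_neg_cancel])
    (fun ε _ _ hε => by simpa using congrFun hε k) h (fun ε _ => by simp)

lemma val_nonneg (ε : Fin n → Bool) (k : Fin n) : 0 ≤ val ε k := by
  unfold _root_.val; split <;> norm_num

lemma val_le_one (ε : Fin n → Bool) (k : Fin n) : val ε k ≤ 1 := by
  unfold _root_.val; split <;> norm_num

lemma val_injective : Function.Injective (val (n := n)) := by
  intro ε η h
  funext k
  have := congrFun h k
  cases hε : ε k <;> cases hη : η k <;> simp [_root_.val, hε, hη] at this ⊢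

lemma val_update_of_ne (ε : Fin n → Bool) {k l : Fin n} (b : Bool) (h : l ≠ k) :
    val (Function.update ε k b) l = val ε l := by
  simp [_root_.val, Function.update_of_ne h]

variable {p : Fin n → ℤ} {i j : Fin n}

lemma mem_BL {ε : Fin n → Bool} :
    ε ∈ BL p i j ↔ p i ≤ val ε i ∧ val ε j = val ε i - p i + p j ∧
      ∀ k, k ≠ i → k ≠ j → val ε k ≤ val ε i - p i + p k := by
  simp [BL]

lemma update_not_mem_BL {k : Fin n} (hki : k ≠ i) (hkj : k ≠ j) {ε : Fin n → Bool}
    (hε : ε ∈ BL p i j) (hk : 1 ≤ val ε i - p i + p k) :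
    Function.update ε k (!ε k) ∈ BL p i j := by
  obtain ⟨hi, hj, hle⟩ := mem_BL.1 hε
  refine mem_BL.2 ⟨?_, ?_, fun l hli hlj => ?_⟩
  · rwa [val_update_of_ne _ _ hki.symm]
  · rwa [val_update_of_ne _ _ hki.symm, val_update_of_ne _ _ hkj.symm]
  rw [val_update_of_ne _ _ hki.symm]
  by_cases hlk : l = k
  · subst hlk
    exact (val_le_one _ _).trans hk
  · rw [val_update_of_ne _ _ hlk]
    exact hle l hli hlj

lemma sum_rho_BL_eq_zero_of_eq_one {k : Fin n} (hki : k ≠ i) (hkj : k ≠ j) (hk : p k = 1) :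
    ∑ ε ∈ BL p i j, rho ε = 0 :=
  sum_rho_eq_zero_of_update_not_mem k fun ε hε =>
    update_not_mem_BL hki hkj hε (by linarith [(mem_BL.1 hε).1])

lemma val_apply_eq_of_mem_BL (h : p i = 1 ∨ p j = 1) {ε : Fin n → Bool}
    (hε : ε ∈ BL p i j) : val ε i = p i := by
  obtain ⟨hi, hj, -⟩ := mem_BL.1 hε
  have := val_le_one ε i
  have := val_le_one ε j
  omega

lemma val_eq_of_mem_BL (hoff : ∀ k, k ≠ i → k ≠ j → p k = 0) {ε : Fin n → Bool}
    (hε : ε ∈ BL p i j) (hi : val ε i = p i) : val ε = p := by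
  obtain ⟨-, hj, hle⟩ := mem_BL.1 hε
  funext k
  by_cases hki : k = i
  · exact hki ▸ hi
  by_cases hkj : k = j
  · rw [hkj, hj, hi, sub_self, zero_add]
  have := hle k hki hkj
  have := val_nonneg ε k
  have := hoff k hki hkj
  omega

lemma card_BL_le_one (hoff : ∀ k, k ≠ i → k ≠ j → p k = 0) (h : p i = 1 ∨ p j = 1) :
    (BL p i j).card ≤ 1 :=
  Finset.card_le_one.2 fun ε hε η hη => val_injective <| by
    rw [val_eq_of_mem_BL hoff hε (val_apply_eq_of_mem_BL h hε),
      val_eq_of_mem_BL hoff hη (val_apply_eq_of_mem_BL h hη)]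

lemma eq_zero_of_one_lt_card_BL (hp : ∀ k, p k = 0 ∨ p k = 1)
    (hoff : ∀ k, k ≠ i → k ≠ j → p k = 0) (hcard : 1 < (BL p i j).card) : p = 0 := by
  have h : p i ≠ 1 ∧ p j ≠ 1 := not_or.1 fun h => (card_BL_le_one hoff h).not_gt hcard
  funext k
  by_cases hki : k = i
  · exact hki ▸ (hp i).resolve_right h.1
  by_cases hkj : k = j
  · exact hkj ▸ (hp j).resolve_right h.2
  exact hoff k hki hkj

lemma sum_rho_BL_zero (hn : 2 < n) (i j : Fin n) : ∑ ε ∈ BL 0 i j, rho ε = 1 := by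
  obtain ⟨k, hki, hkj⟩ := Fin.exists_ne_and_ne_of_two_lt i j hn
  rw [← Finset.sum_filter_add_sum_filter_not (BL 0 i j) (fun ε => val ε i = 0)]
  have hbottom : (BL 0 i j).filter (fun ε => val ε i = 0) = {fun _ => false} := by
    refine Finset.eq_singleton_iff_unique_mem.2 ⟨by simp [BL, _root_.val], fun ε hε => ?_⟩
    obtain ⟨hε, hi⟩ := Finset.mem_filter.1 hε
    refine val_injective ?_
    rw [val_eq_of_mem_BL (fun _ _ _ => rfl) hε hi]
    funext
    simp [_root_.val]
  have htop : ∑ ε ∈ (BL 0 i j).filter (fun ε => ¬val ε i = 0), rho ε = 0 := by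
    refine sum_rho_eq_zero_of_update_not_mem k fun ε hε => ?_
    obtain ⟨hε, hi⟩ := Finset.mem_filter.1 hε
    refine Finset.mem_filter.2 ⟨update_not_mem_BL hki hkj hε ?_, ?_⟩
    · simp only [Pi.zero_apply, sub_zero, add_zero]
      have := val_nonneg ε i
      omega
    · rwa [val_update_of_ne _ _ hki.symm]
  rw [hbottom, htop, Finset.sum_singleton, add_zero]
  simp [rho]

end

theorem stmt_10_general (n : ℕ) (hn : 3 ≤ n) (p : Fin n → ℤ) (hp : ∀ k, p k = 0 ∨ p k = 1)
    (i j : Fin n) (hcard : 1 < (BL p i j).card) :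
    ∑ ε ∈ BL p i j, rho ε ∈ ({0, 1} : Set ℤ) := by
  by_cases hfree : ∃ k, k ≠ i ∧ k ≠ j ∧ p k = 1
  · obtain ⟨k, hki, hkj, hk⟩ := hfree
    exact Or.inl (sum_rho_BL_eq_zero_of_eq_one hki hkj hk)
  have hoff : ∀ k, k ≠ i → k ≠ j → p k = 0 := fun k hki hkj =>
    (hp k).resolve_right fun hk => hfree ⟨k, hki, hkj, hk⟩
  obtain rfl := eq_zero_of_one_lt_card_BL hp hoff hcard
  exact Or.inr (sum_rho_BL_zero hn i j)

theorem stmt_10 (n : ℕ) (hn : 3 ≤ n) (p : Fin n → ℤ) (hp : ∀ k, p k = 0 ∨ p k = 1)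
    (i j : Fin n) (hij : i ≠ j) (hcard : 1 < (BL p i j).card) :
    ∑ ε ∈ BL p i j, rho ε ∈ ({0, 1} : Set ℤ) :=
  stmt_10_general n hn p hp i j hcard
end
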